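/- (Empirical pre-sparsity for Lasso, deterministic.) In the Lasso setup with d_i = f_i'β₀ + a_i + v_i, ‖β₀‖₀ ≤ s with support T, ((1/n)∑a_i²)^{1/2} ≤ c_s, penalty λ/n ≥ c‖S‖_∞ with c > 1, loadings ℓΥ⁰ ≤ Υ ≤ uΥ⁰ with u ≥ 1 ≥ ℓ > 1/c, let T̂ be the support of the Lasso solution β̂ and m̂ = |T̂ ∖ T|. Then √m̂ ≤ √(φ_max(m̂)) · ‖(Υ⁰)^{−1}‖_∞ · c₀ · ( 2√s/κ_{c₀} + 6n c_s/λ ), where c₀ = (uc+1)/(ℓc−1), φ_max(m) is the maximal m-sparse eigenvalue of (1/n)F'F, and κ_{c₀} is the weighted restricted eigenvalue (assumed positive). -/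

import Mathlib

/-!
For a wrongly selected regressor `j ∈ T̂ ∖ T` the KKT condition of the Lasso says that the
empirical score of the residual `d - Fβ̂` at `j` has size `λΥ_j/n ≥ λℓΥ⁰_j/n`. The noise part `v`
of that residual contributes at most `λΥ⁰_j/(cn)`, so the score of `w = a - F(β̂ - β₀)` at `j` is
at least `(λ/n)(ℓ - 1/c)Υ⁰_j`. Squaring and summing over the `m̂` wrong regressors, and testing
against the `m̂`-sparse vector of these scores, gives
`√m̂ (λ/n)(ℓ - 1/c) ≤ 2‖(Υ⁰)⁻¹‖_∞ √φ_max(m̂) ‖w‖_{2,n}`. Finally `‖w‖_{2,n} ≤ c_s + ‖F(β̂ - β₀)‖_{2,n}`, and the prediction norm is bounded by the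
usual Lasso rate `2c_s + (λ/n)(u + 1/c)√s/κ_{c₀}`, obtained from the basic inequality at `β₀` and
the restricted eigenvalue on the cone `‖(Υ⁰δ)_{Tᶜ}‖₁ ≤ c₀‖(Υ⁰δ)_T‖₁`.
-/

/-- Empirical prediction norm `‖Fδ‖_{2,n} = ((1/n)∑ᵢ (fᵢ'δ)²)^{1/2}`. -/
noncomputable def predNorm (n p : ℕ) (F : Matrix (Fin n) (Fin p) ℝ)
    (δ : Fin p → ℝ) : ℝ :=
  Real.sqrt ((1 / (n : ℝ)) * ∑ i, (∑ j, F i j * δ j) ^ 2)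

open Finset Matrix

theorem le_of_sq_le_mul {P K : ℝ} (hK : 0 ≤ K) (h : P ^ 2 ≤ P * K) : P ≤ K := by
  nlinarith

theorem nonneg_of_forall_mul_add_sq_nonneg {B C : ℝ}
    (h : ∀ t ∈ Set.Ioo (0 : ℝ) 1, 0 ≤ t * B + t ^ 2 * C) : 0 ≤ B := by
  have hlim : Filter.Tendsto (fun t => B + t * C) (nhdsWithin 0 (Set.Ioi 0)) (nhds B) :=
    ((continuous_const.add (continuous_id.mul continuous_const)).tendsto' 0 B
      (by simp)).mono_left nhdsWithin_le_nhds
  refine ge_of_tendsto hlim ?_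
  filter_upwards [Ioo_mem_nhdsGT zero_lt_one] with t ht
  nlinarith [h t ht, ht.1]

theorem sqrt_card_mul_le_sqrt_sum_sq {α : Type*} {W : Finset α} {g : α → ℝ} {q M : ℝ}
    (hq : 0 ≤ q) (hM : 0 ≤ M) (h : ∀ j ∈ W, q ≤ M * |g j|) :
    √(#W : ℝ) * q ≤ M * √(∑ j ∈ W, g j ^ 2) := by
  have hsq : ∑ _j ∈ W, q ^ 2 ≤ ∑ j ∈ W, (M * g j) ^ 2 := sum_le_sum fun j hj => by
    rw [← sq_abs (M * g j), abs_mul, abs_of_nonneg hM]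
    exact pow_le_pow_left₀ hq (h j hj) 2
  rw [sum_const, nsmul_eq_mul] at hsq
  simp only [mul_pow, ← mul_sum] at hsq
  calc √(#W : ℝ) * q = √(#W * q ^ 2) := by
        rw [Real.sqrt_mul (Nat.cast_nonneg _), Real.sqrt_sq hq]
    _ ≤ √(M ^ 2 * ∑ j ∈ W, g j ^ 2) := Real.sqrt_le_sqrt hsq
    _ = M * √(∑ j ∈ W, g j ^ 2) := by rw [Real.sqrt_mul (sq_nonneg M), Real.sqrt_sq hM]

namespace Lasso

variable {ι ι' : Type*} [Fintype ι]

noncomputable def empNorm (N : ℝ) (x : ι → ℝ) : ℝ := √((1 / N) * ∑ i, x i ^ 2)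

noncomputable def empCov (N : ℝ) (F : Matrix ι ι' ℝ) (w : ι → ℝ) (j : ι') : ℝ :=
  (1 / N) * ∑ i, F i j * w i

theorem empNorm_nonneg (N : ℝ) (x : ι → ℝ) : 0 ≤ empNorm N x := Real.sqrt_nonneg _

theorem sq_empNorm {N : ℝ} (hN : 0 ≤ N) (x : ι → ℝ) :
    empNorm N x ^ 2 = (1 / N) * ∑ i, x i ^ 2 :=
  Real.sq_sqrt (by positivity)

theorem empNorm_eq_mul_norm {N : ℝ} (hN : 0 ≤ N) (x : ι → ℝ) :
    empNorm N x = √(1 / N) * ‖WithLp.toLp 2 x‖ := by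
  rw [empNorm, EuclideanSpace.norm_eq, Real.sqrt_mul (one_div_nonneg.2 hN)]
  simp

theorem empNorm_smul {N : ℝ} (hN : 0 ≤ N) (r : ℝ) (x : ι → ℝ) :
    empNorm N (r • x) = |r| * empNorm N x := by
  rw [empNorm_eq_mul_norm hN, empNorm_eq_mul_norm hN, WithLp.toLp_smul, norm_smul,
    Real.norm_eq_abs]
  ring

theorem empNorm_sub_le {N : ℝ} (hN : 0 ≤ N) (x y : ι → ℝ) :
    empNorm N (x - y) ≤ empNorm N x + empNorm N y := by
  simp only [empNorm_eq_mul_norm hN, WithLp.toLp_sub, ← mul_add]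
  exact mul_le_mul_of_nonneg_left (norm_sub_le _ _) (Real.sqrt_nonneg _)

theorem inner_le_empNorm_mul {N : ℝ} (hN : 0 ≤ N) (x y : ι → ℝ) :
    (1 / N) * ∑ i, x i * y i ≤ empNorm N x * empNorm N y := by
  have hN' : 0 ≤ 1 / N := one_div_nonneg.2 hN
  calc (1 / N) * ∑ i, x i * y i ≤ (1 / N) * (√(∑ i, x i ^ 2) * √(∑ i, y i ^ 2)) :=
        mul_le_mul_of_nonneg_left (Real.sum_mul_le_sqrt_mul_sqrt _ _ _) hN'
    _ = √(1 / N) * √(1 / N) * (√(∑ i, x i ^ 2) * √(∑ i, y i ^ 2)) := by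
        rw [Real.mul_self_sqrt hN']
    _ = empNorm N x * empNorm N y := by
        rw [empNorm, empNorm, Real.sqrt_mul hN', Real.sqrt_mul hN']; ring

theorem empCov_add (N : ℝ) (F : Matrix ι ι' ℝ) (w v : ι → ℝ) (j : ι') :
    empCov N F (w + v) j = empCov N F w j + empCov N F v j := by
  simp only [empCov, Pi.add_apply, mul_add, sum_add_distrib]

variable [Fintype ι']

theorem sum_mul_empCov (N : ℝ) (F : Matrix ι ι' ℝ) (α : ι' → ℝ) (w : ι → ℝ) :
    ∑ j, α j * empCov N F w j = (1 / N) * ∑ i, (F *ᵥ α) i * w i := by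
  simp only [empCov, mulVec, dotProduct, Finset.mul_sum, Finset.sum_mul]
  rw [Finset.sum_comm]
  exact sum_congr rfl fun i _ => sum_congr rfl fun j _ => by ring

noncomputable def sparseEigMax (N : ℝ) (F : Matrix ι ι' ℝ) (m : ℕ) : ℝ :=
  sSup {x : ℝ | ∃ α : ι' → ℝ, #{j | α j ≠ 0} ≤ m ∧
    ∑ j, α j ^ 2 = 1 ∧ x = (1 / N) * ∑ i, (F *ᵥ α) i ^ 2}

noncomputable def restrictedEigenvalue [DecidableEq ι'] (N : ℝ) (F : Matrix ι ι' ℝ)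
    (Υ0 : ι' → ℝ) (T : Finset ι') (c0 s : ℝ) : ℝ :=
  sInf {r : ℝ | ∃ δ : ι' → ℝ, δ ≠ 0 ∧
    ∑ j ∈ Tᶜ, |Υ0 j * δ j| ≤ c0 * ∑ j ∈ T, |Υ0 j * δ j| ∧
    r = √s * empNorm N (F *ᵥ δ) / ∑ j ∈ T, |Υ0 j * δ j|}

/-- `μ` is the penalty level `λ / n`. -/
noncomputable def lassoObjective (F : Matrix ι ι' ℝ) (d : ι → ℝ) (N μ : ℝ) (Υ β : ι' → ℝ) :
    ℝ :=
  (1 / N) * (∑ i, (d i - (F *ᵥ β) i) ^ 2) + μ * ∑ j, Υ j * |β j|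

variable {N : ℝ} {F : Matrix ι ι' ℝ} {m : ℕ}

theorem sq_empNorm_mulVec_le_sparseEigMax (hN : 0 ≤ N) {α : ι' → ℝ}
    (hα : #{j | α j ≠ 0} ≤ m) (hα1 : ∑ j, α j ^ 2 = 1) :
    empNorm N (F *ᵥ α) ^ 2 ≤ sparseEigMax N F m := by
  refine le_csSup ⟨(1 / N) * ∑ i, ∑ j, F i j ^ 2, ?_⟩ ⟨α, hα, hα1, sq_empNorm hN _⟩
  rintro x ⟨β, -, hβ1, rfl⟩
  gcongr with i
  simpa [hβ1, mulVec, dotProduct] using Finset.sum_mul_sq_le_sq_mul_sq univ (F i) β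

theorem empNorm_mulVec_le (hN : 0 ≤ N) {α : ι' → ℝ} (hα : #{j | α j ≠ 0} ≤ m) :
    empNorm N (F *ᵥ α) ≤ √(sparseEigMax N F m) * √(∑ j, α j ^ 2) := by
  set ρ := √(∑ j, α j ^ 2)
  rcases (Real.sqrt_nonneg _ : 0 ≤ ρ).eq_or_lt with hρ | hρ
  · have hα0 : α = 0 := by
      ext j
      have := (Finset.sum_eq_zero_iff_of_nonneg fun j _ => sq_nonneg (α j)).1
        (Real.sqrt_eq_zero'.1 hρ.symm |>.antisymm (by positivity)) j (mem_univ j)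
      simpa using this
    rw [hα0, mulVec_zero, empNorm_eq_mul_norm hN, WithLp.toLp_zero, norm_zero, mul_zero]
    positivity
  · have hρ0 : ρ ≠ 0 := hρ.ne'
    have hsupp : #{j | (ρ⁻¹ • α) j ≠ 0} ≤ m := by
      simpa [hρ0] using hα
    have hunit : ∑ j, (ρ⁻¹ • α) j ^ 2 = 1 := by
      simp only [Pi.smul_apply, smul_eq_mul, mul_pow, ← Finset.mul_sum]
      rw [inv_pow, Real.sq_sqrt (by positivity), inv_mul_cancel₀]
      exact (Real.sqrt_pos.1 hρ).ne'
    have h := Real.le_sqrt_of_sq_le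
      (sq_empNorm_mulVec_le_sparseEigMax (F := F) hN hsupp hunit)
    rw [mulVec_smul, empNorm_smul hN, abs_inv, abs_of_pos hρ] at h
    rwa [inv_mul_le_iff₀ hρ, mul_comm] at h

/-- Duality: the scores on `W` are tested against the `#W`-sparse vector they form. -/
theorem sqrt_sum_sq_empCov_le (hN : 0 ≤ N) {W : Finset ι'} (hW : #W ≤ m) (w : ι → ℝ) :
    √(∑ j ∈ W, empCov N F w j ^ 2) ≤ √(sparseEigMax N F m) * empNorm N w := by
  classical
  set α : ι' → ℝ := fun j => if j ∈ W then empCov N F w j else 0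
  have hsupp : #{j | α j ≠ 0} ≤ m :=
    (card_le_card fun j hj => by by_contra h; simp [α, h] at hj).trans hW
  have hαsq : ∑ j, α j ^ 2 = ∑ j ∈ W, empCov N F w j ^ 2 := by
    simp [α, ite_pow, Finset.sum_ite_mem]
  have hαcov : ∑ j, α j * empCov N F w j = ∑ j ∈ W, empCov N F w j ^ 2 := by
    simp [α, ite_mul, Finset.sum_ite_mem, sq]
  refine le_of_sq_le_mul (mul_nonneg (Real.sqrt_nonneg _) (empNorm_nonneg _ _)) ?_
  calc √(∑ j ∈ W, empCov N F w j ^ 2) ^ 2 = (1 / N) * ∑ i, (F *ᵥ α) i * w i := by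
        rw [Real.sq_sqrt (by positivity), ← hαcov, sum_mul_empCov]
    _ ≤ empNorm N (F *ᵥ α) * empNorm N w := inner_le_empNorm_mul hN _ _
    _ ≤ √(sparseEigMax N F m) * √(∑ j, α j ^ 2) * empNorm N w := by
        gcongr
        · exact empNorm_nonneg _ _
        · exact empNorm_mulVec_le hN hsupp
    _ = _ := by rw [hαsq]; ring

theorem restrictedEigenvalue_mul_le [DecidableEq ι'] {Υ0 : ι' → ℝ} {T : Finset ι'}
    {c0 s : ℝ} {δ : ι' → ℝ} (hcone : ∑ j ∈ Tᶜ, |Υ0 j * δ j| ≤ c0 * ∑ j ∈ T, |Υ0 j * δ j|) :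
    restrictedEigenvalue N F Υ0 T c0 s * ∑ j ∈ T, |Υ0 j * δ j| ≤ √s * empNorm N (F *ᵥ δ) := by
  have hP : 0 ≤ √s * empNorm N (F *ᵥ δ) := mul_nonneg (Real.sqrt_nonneg _) (empNorm_nonneg _ _)
  rcases (sum_nonneg fun j _ => abs_nonneg (Υ0 j * δ j) : 0 ≤ ∑ j ∈ T, |Υ0 j * δ j|).eq_or_lt
    with hA | hA
  · rw [← hA, mul_zero]; exact hP
  have hδ : δ ≠ 0 := by rintro rfl; simp at hA
  rw [← le_div_iff₀ hA]
  refine csInf_le ⟨0, ?_⟩ ⟨δ, hδ, hcone, rfl⟩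
  rintro r ⟨δ', -, -, rfl⟩
  exact div_nonneg (mul_nonneg (Real.sqrt_nonneg _) (empNorm_nonneg _ _))
    (sum_nonneg fun j _ => abs_nonneg _)

theorem lassoObjective_shrink [DecidableEq ι'] (d : ι → ℝ) (N μ : ℝ) (Υ β : ι' → ℝ) (j : ι')
    {t : ℝ} (ht1 : t ≤ 1) :
    lassoObjective F d N μ Υ (β - t • Pi.single j (β j)) = lassoObjective F d N μ Υ β
      + t * (β j * (2 * empCov N F (d - F *ᵥ β) j) - μ * Υ j * |β j|)
      + t ^ 2 * ((1 / N) * β j ^ 2 * ∑ i, F i j ^ 2) := by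
  have hres : ∀ i, d i - (F *ᵥ (β - t • Pi.single j (β j))) i
      = (d - F *ᵥ β) i + t * β j * F i j := by
    intro i
    simp [mulVec_sub, mulVec_smul]
    ring
  have hpen : ∀ k, Υ k * |(β - t • Pi.single j (β j) : ι' → ℝ) k|
      = Υ k * |β k| - (Pi.single j (t * (Υ j * |β j|)) : ι' → ℝ) k := by
    intro k
    rcases eq_or_ne k j with rfl | hk
    · simp only [Pi.sub_apply, Pi.smul_apply, Pi.single_eq_same, smul_eq_mul]
      rw [show β k - t * β k = (1 - t) * β k by ring, abs_mul, abs_of_nonneg (by linarith)]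
      ring
    · simp [hk]
  have hsq : ∑ i, ((d - F *ᵥ β) i + t * β j * F i j) ^ 2 = ∑ i, (d - F *ᵥ β) i ^ 2
      + t * β j * (2 * ∑ i, F i j * (d - F *ᵥ β) i) + t ^ 2 * β j ^ 2 * ∑ i, F i j ^ 2 := by
    simp only [Finset.mul_sum, ← Finset.sum_add_distrib]
    exact sum_congr rfl fun i _ => by ring
  simp only [lassoObjective, hres, hpen, sum_sub_distrib, sum_pi_single', mem_univ, if_true,
    empCov]
  rw [hsq]
  simp only [Pi.sub_apply]
  ring

variable {d : ι → ℝ} {μ : ℝ} {Υ βhat : ι' → ℝ}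

/-- One half of the KKT condition: optimality against shrinking `βhat j` towards zero. -/
theorem lasso_kkt (hopt : ∀ β, lassoObjective F d N μ Υ βhat ≤ lassoObjective F d N μ Υ β)
    (j : ι') : μ * Υ j * |βhat j| ≤ βhat j * (2 * empCov N F (d - F *ᵥ βhat) j) := by
  classical
  refine sub_nonneg.1 <| nonneg_of_forall_mul_add_sq_nonneg
    (C := (1 / N) * βhat j ^ 2 * ∑ i, F i j ^ 2) fun t ht => ?_
  have h := hopt (βhat - t • Pi.single j (βhat j))
  rw [lassoObjective_shrink d N μ Υ βhat j ht.2.le] at h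
  linarith

theorem lasso_kkt_of_ne_zero
    (hopt : ∀ β, lassoObjective F d N μ Υ βhat ≤ lassoObjective F d N μ Υ β)
    {j : ι'} (hj : βhat j ≠ 0) : μ * Υ j ≤ |2 * empCov N F (d - F *ᵥ βhat) j| := by
  have h := (lasso_kkt hopt j).trans (le_abs_self _)
  rw [abs_mul, mul_comm |βhat j|] at h
  exact le_of_mul_le_mul_right h (abs_pos.2 hj)

theorem lasso_basic_inequality (hN : 0 ≤ N)
    (hopt : ∀ β, lassoObjective F d N μ Υ βhat ≤ lassoObjective F d N μ Υ β)
    {β₀ : ι' → ℝ} {e : ι → ℝ} (hd : d = F *ᵥ β₀ + e) :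
    empNorm N (F *ᵥ (βhat - β₀)) ^ 2 ≤ 2 * ((1 / N) * ∑ i, e i * (F *ᵥ (βhat - β₀)) i)
      + μ * (∑ j, Υ j * |β₀ j| - ∑ j, Υ j * |βhat j|) := by
  have h := hopt β₀
  have hres : ∀ i, d i - (F *ᵥ βhat) i = e i - (F *ᵥ (βhat - β₀)) i := fun i => by
    simp [hd, mulVec_sub]; ring
  have hres₀ : ∀ i, d i - (F *ᵥ β₀) i = e i := fun i => by simp [hd]
  have hsq : ∑ i, (e i - (F *ᵥ (βhat - β₀)) i) ^ 2 = ∑ i, e i ^ 2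
      - 2 * ∑ i, e i * (F *ᵥ (βhat - β₀)) i + ∑ i, (F *ᵥ (βhat - β₀)) i ^ 2 := by
    simp only [Finset.mul_sum, ← Finset.sum_sub_distrib, ← Finset.sum_add_distrib]
    exact sum_congr rfl fun i _ => by ring
  simp only [lassoObjective, hres, hsq, hres₀] at h
  rw [sq_empNorm hN]
  linarith

theorem weighted_penalty_diff_le [DecidableEq ι'] {T : Finset ι'} {ℓ u : ℝ}
    {Υ0 β₀ : ι' → ℝ} (hℓ : 0 ≤ ℓ) (hΥ0 : ∀ j, 0 ≤ Υ0 j)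
    (hload : ∀ j, ℓ * Υ0 j ≤ Υ j ∧ Υ j ≤ u * Υ0 j) (hβ₀ : ∀ j ∉ T, β₀ j = 0) :
    ∑ j, Υ j * |β₀ j| - ∑ j, Υ j * |βhat j|
      ≤ u * ∑ j ∈ T, |Υ0 j * (βhat - β₀) j| - ℓ * ∑ j ∈ Tᶜ, |Υ0 j * (βhat - β₀) j| := by
  have hon : ∀ j ∈ T, Υ j * |β₀ j| - Υ j * |βhat j| ≤ u * |Υ0 j * (βhat - β₀) j| := by
    intro j _
    have hΥ : 0 ≤ Υ j := (mul_nonneg hℓ (hΥ0 j)).trans (hload j).1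
    calc Υ j * |β₀ j| - Υ j * |βhat j| = Υ j * (|β₀ j| - |βhat j|) := by ring
      _ ≤ Υ j * |βhat j - β₀ j| := by
          gcongr; rw [abs_sub_comm]; exact abs_sub_abs_le_abs_sub _ _
      _ ≤ u * Υ0 j * |βhat j - β₀ j| := by gcongr; exact (hload j).2
      _ = u * |Υ0 j * (βhat - β₀) j| := by
          rw [abs_mul, abs_of_nonneg (hΥ0 j), Pi.sub_apply]; ring
  have hoff : ∀ j ∈ Tᶜ, Υ j * |β₀ j| - Υ j * |βhat j| ≤ -(ℓ * |Υ0 j * (βhat - β₀) j|) := by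
    intro j hj
    rw [Pi.sub_apply, hβ₀ j (mem_compl.1 hj), sub_zero, abs_mul, abs_of_nonneg (hΥ0 j),
      abs_zero, mul_zero, zero_sub, neg_le_neg_iff, ← mul_assoc]
    exact mul_le_mul_of_nonneg_right (hload j).1 (abs_nonneg _)
  rw [← sum_sub_distrib, ← sum_add_sum_compl T, mul_sum, mul_sum, sub_eq_add_neg,
    ← sum_neg_distrib]
  exact add_le_add (sum_le_sum hon) (sum_le_sum hoff)

theorem noise_inner_le {c : ℝ} (hc : 0 < c) {Υ0 : ι' → ℝ} (hΥ0 : ∀ j, 0 ≤ Υ0 j)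
    {v : ι → ℝ} (hscore : ∀ j, c * |2 * empCov N F v j| ≤ μ * Υ0 j) (δ : ι' → ℝ) :
    2 * ((1 / N) * ∑ i, v i * (F *ᵥ δ) i) ≤ μ / c * ∑ j, |Υ0 j * δ j| := by
  have hterm : ∀ j, δ j * (2 * empCov N F v j) ≤ μ / c * |Υ0 j * δ j| := fun j => by
    rw [abs_mul, abs_of_nonneg (hΥ0 j)]
    calc δ j * (2 * empCov N F v j) ≤ |δ j| * |2 * empCov N F v j| := by
          rw [← abs_mul]; exact le_abs_self _
      _ ≤ |δ j| * (μ * Υ0 j / c) := by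
          gcongr; rw [le_div_iff₀ hc, mul_comm]; exact hscore j
      _ = μ / c * (Υ0 j * |δ j|) := by ring
  calc 2 * ((1 / N) * ∑ i, v i * (F *ᵥ δ) i) = ∑ j, δ j * (2 * empCov N F v j) := by
        simp only [mul_left_comm _ (2 : ℝ), ← mul_sum, sum_mul_empCov, mul_comm (v _)]
    _ ≤ μ / c * ∑ j, |Υ0 j * δ j| := by rw [mul_sum]; exact sum_le_sum fun j _ => hterm j

/-- Inside the cone the restricted eigenvalue bounds `A`; outside it the left side is negative. -/
theorem mul_sub_mul_le_of_cone {p q c0 A B R κ : ℝ} (hp : 0 ≤ p) (hq : 0 < q)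
    (hc0 : q * c0 = p) (hB : 0 ≤ B) (hR : 0 ≤ R) (hκ : 0 < κ)
    (hre : B ≤ c0 * A → κ * A ≤ R) :
    p * A - q * B ≤ p * R / κ := by
  rcases le_or_gt B (c0 * A) with hcone | hcone
  · have hA : A ≤ R / κ := by rw [le_div_iff₀ hκ, mul_comm]; exact hre hcone
    calc p * A - q * B ≤ p * (R / κ) := by nlinarith
      _ = p * R / κ := by ring
  · have hneg : p * A < q * B := by
      rw [← hc0, mul_assoc]; exact mul_lt_mul_of_pos_left hcone hq
    have hpos : 0 ≤ p * R / κ := by positivity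
    linarith

theorem lasso_prediction_bound [DecidableEq ι'] (hN : 0 ≤ N)
    (hopt : ∀ β, lassoObjective F d N μ Υ βhat ≤ lassoObjective F d N μ Υ β)
    {β₀ : ι' → ℝ} {a v : ι → ℝ} (hd : d = F *ᵥ β₀ + (a + v))
    {T : Finset ι'} (hβ₀ : ∀ j ∉ T, β₀ j = 0) {cs : ℝ} (ha : empNorm N a ≤ cs)
    {c ℓ u c0 κ s : ℝ} {Υ0 : ι' → ℝ} (hΥ0 : ∀ j, 0 ≤ Υ0 j) (hc : 0 < c) (hℓc : 1 / c < ℓ)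
    (hu : 0 ≤ u) (hload : ∀ j, ℓ * Υ0 j ≤ Υ j ∧ Υ j ≤ u * Υ0 j)
    (hμ : 0 ≤ μ) (hscore : ∀ j, c * |2 * empCov N F v j| ≤ μ * Υ0 j)
    (hc0 : (ℓ - 1 / c) * c0 = u + 1 / c) (hκ : 0 < κ)
    (hre : ∑ j ∈ Tᶜ, |Υ0 j * (βhat - β₀) j| ≤ c0 * ∑ j ∈ T, |Υ0 j * (βhat - β₀) j| →
      κ * ∑ j ∈ T, |Υ0 j * (βhat - β₀) j| ≤ √s * empNorm N (F *ᵥ (βhat - β₀))) :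
    empNorm N (F *ᵥ (βhat - β₀)) ≤ 2 * cs + μ * (u + 1 / c) * √s / κ := by
  have hbasic := lasso_basic_inequality hN hopt hd
  have hpen := weighted_penalty_diff_le (βhat := βhat) ((one_div_pos.2 hc).trans hℓc).le hΥ0
    hload hβ₀
  set δ := βhat - β₀
  set P := empNorm N (F *ᵥ δ)
  set A := ∑ j ∈ T, |Υ0 j * δ j|
  set B := ∑ j ∈ Tᶜ, |Υ0 j * δ j|
  have hcs : 0 ≤ cs := (empNorm_nonneg _ _).trans ha
  have hP : 0 ≤ P := empNorm_nonneg _ _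
  have hnoise := noise_inner_le hc hΥ0 hscore δ
  have hmodel_err : 2 * ((1 / N) * ∑ i, a i * (F *ᵥ δ) i) ≤ 2 * cs * P := by
    have := (inner_le_empNorm_mul hN a (F *ᵥ δ)).trans
      (mul_le_mul_of_nonneg_right ha (empNorm_nonneg _ _))
    linarith
  have hcone : μ * ((u + 1 / c) * A - (ℓ - 1 / c) * B) ≤ μ * ((u + 1 / c) * (√s * P) / κ) :=
    mul_le_mul_of_nonneg_left (mul_sub_mul_le_of_cone (by positivity) (by linarith) hc0
      (sum_nonneg fun j _ => abs_nonneg _) (by positivity) hκ hre) hμ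
  have hsplit : ∑ i, (a + v) i * (F *ᵥ δ) i
      = ∑ i, a i * (F *ᵥ δ) i + ∑ i, v i * (F *ᵥ δ) i := by
    simp only [Pi.add_apply, add_mul, sum_add_distrib]
  have hAB : μ / c * ∑ j, |Υ0 j * δ j| + μ * (u * A - ℓ * B)
      = μ * ((u + 1 / c) * A - (ℓ - 1 / c) * B) := by
    rw [← sum_add_sum_compl T]; ring
  rw [hsplit, mul_add (1 / N), mul_add 2] at hbasic
  refine le_of_sq_le_mul (by positivity) ?_
  have hfactor : μ * ((u + 1 / c) * (√s * P) / κ) = P * (μ * (u + 1 / c) * √s / κ) := by ring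
  linarith [mul_le_mul_of_nonneg_left hpen hμ]

theorem lasso_score_lower_bound
    (hopt : ∀ β, lassoObjective F d N μ Υ βhat ≤ lassoObjective F d N μ Υ β)
    {j : ι'} (hj : βhat j ≠ 0) {w v : ι → ℝ} (hres : d - F *ᵥ βhat = w + v)
    {c ℓ : ℝ} {Υ0 : ι' → ℝ} (hc : 0 < c) (hμ : 0 ≤ μ) (hΥ0 : ∀ k, 0 < Υ0 k)
    (hload : ℓ * Υ0 j ≤ Υ j) (hscore : c * |2 * empCov N F v j| ≤ μ * Υ0 j) :
    μ * (ℓ - 1 / c) ≤ 2 * (⨆ k, (Υ0 k)⁻¹) * |empCov N F w j| := by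
  have hkkt := lasso_kkt_of_ne_zero hopt hj
  rw [hres, empCov_add, mul_add] at hkkt
  have hv : |2 * empCov N F v j| ≤ μ / c * Υ0 j := by
    rw [div_mul_eq_mul_div, le_div_iff₀ hc, mul_comm]; exact hscore
  have hw : μ * (ℓ - 1 / c) * Υ0 j ≤ 2 * |empCov N F w j| := by
    have htri := abs_add_le (2 * empCov N F w j) (2 * empCov N F v j)
    rw [abs_mul, abs_two] at htri
    have hℓ := mul_le_mul_of_nonneg_left hload hμ
    have hsplit : μ * (ℓ - 1 / c) * Υ0 j = μ * (ℓ * Υ0 j) - μ / c * Υ0 j := by ring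
    linarith
  have hsup : (Υ0 j)⁻¹ ≤ ⨆ k, (Υ0 k)⁻¹ :=
    le_ciSup (f := fun k => (Υ0 k)⁻¹) (Set.finite_range _).bddAbove j
  calc μ * (ℓ - 1 / c) = μ * (ℓ - 1 / c) * Υ0 j * (Υ0 j)⁻¹ := by
        field_simp [(hΥ0 j).ne']
    _ ≤ 2 * |empCov N F w j| * (Υ0 j)⁻¹ :=
        mul_le_mul_of_nonneg_right hw (inv_pos.2 (hΥ0 j)).le
    _ ≤ 2 * |empCov N F w j| * ⨆ k, (Υ0 k)⁻¹ := by gcongr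
    _ = _ := by ring

end Lasso

theorem Lasso.pre_sparsity_of_bounds {M q p c0 Sup φ X cs lam n κ s : ℝ} (hn : 0 < n)
    (hlam : 0 < lam) (hq : 0 < q) (hc0 : q * c0 = p) (hp : 1 ≤ p) (hcs : 0 ≤ cs)
    (hK : 0 ≤ φ * Sup) (hM : M * (lam / n * q) ≤ 2 * Sup * (φ * X))
    (hX : X ≤ 3 * cs + lam / n * p * √s / κ) :
    M ≤ φ * Sup * c0 * (2 * √s / κ + 6 * n * cs / lam) := by
  refine le_of_mul_le_mul_right (hM.trans ?_) (by positivity : 0 < lam / n * q)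
  have hexp : φ * Sup * c0 * (2 * √s / κ + 6 * n * cs / lam) * (lam / n * q)
      = φ * Sup * p * (2 * (lam / n * √s / κ) + 6 * cs) := by
    rw [← hc0]; field_simp
  have hcs' := mul_le_mul_of_nonneg_left hp (mul_nonneg hK hcs)
  calc 2 * Sup * (φ * X) = 2 * (φ * Sup) * X := by ring
    _ ≤ 2 * (φ * Sup) * (3 * cs + lam / n * p * √s / κ) := by gcongr
    _ ≤ _ := by rw [hexp]; linear_combination 6 * hcs'

open Lasso in
theorem lasso_empirical_pre_sparsity_general
    (n p s : ℕ) (hn : 0 < n)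
    (f : Matrix (Fin n) (Fin p) ℝ)
    (β₀ : Fin p → ℝ) (T : Finset (Fin p))
    (hT : T = Finset.univ.filter (fun j => β₀ j ≠ 0))
    (d a v : Fin n → ℝ)
    (hmodel : ∀ i, d i = (∑ j, f i j * β₀ j) + a i + v i)
    (cs : ℝ)
    (hcs : Real.sqrt ((1 / (n : ℝ)) * ∑ i, (a i) ^ 2) ≤ cs)
    (Υ0 Υ : Fin p → ℝ) (hΥ0 : ∀ j, 0 < Υ0 j)
    (c ℓ u lam : ℝ) (hc : 1 < c) (hu : 1 ≤ u) (hℓc : 1 / c < ℓ)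
    (hlampos : 0 < lam)
    (hload : ∀ j, ℓ * Υ0 j ≤ Υ j ∧ Υ j ≤ u * Υ0 j)
    (S : Fin p → ℝ)
    (hS : ∀ j, S j = 2 * ((1 / (n : ℝ)) * ∑ i, f i j * v i) / Υ0 j)
    (hlam : ∀ j, c * |S j| ≤ lam / n)
    (βhat : Fin p → ℝ)
    (hopt : ∀ β : Fin p → ℝ,
      (1 / (n : ℝ)) * (∑ i, (d i - ∑ j, f i j * βhat j) ^ 2)
          + (lam / n) * ∑ j, Υ j * |βhat j|
        ≤ (1 / (n : ℝ)) * (∑ i, (d i - ∑ j, f i j * β j) ^ 2)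
          + (lam / n) * ∑ j, Υ j * |β j|)
    (c0 κ : ℝ) (hc0 : c0 = (u * c + 1) / (ℓ * c - 1))
    (hκ : κ = sInf {r : ℝ | ∃ δ : Fin p → ℝ, δ ≠ 0 ∧
      (∑ j ∈ Tᶜ, |Υ0 j * δ j|) ≤ c0 * ∑ j ∈ T, |Υ0 j * δ j| ∧
      r = Real.sqrt s * predNorm n p f δ / ∑ j ∈ T, |Υ0 j * δ j|})
    (hκpos : 0 < κ)
    (That : Finset (Fin p)) (hThat : That = Finset.univ.filter (fun j => βhat j ≠ 0))
    (mhat : ℕ) (hmhat : mhat = (That \ T).card)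
    (φmax : ℕ → ℝ)
    (hφmax : ∀ k : ℕ, φmax k = sSup {x : ℝ | ∃ α : Fin p → ℝ,
      (Finset.univ.filter (fun j => α j ≠ 0)).card ≤ k ∧ (∑ j, (α j) ^ 2) = 1 ∧
      x = (1 / (n : ℝ)) * ∑ i, (∑ j, f i j * α j) ^ 2}) :
    Real.sqrt mhat
      ≤ Real.sqrt (φmax mhat) * (⨆ j, (Υ0 j)⁻¹) * c0
          * (2 * Real.sqrt s / κ + 6 * n * cs / lam) := by
  have hN : (0 : ℝ) < n := Nat.cast_pos.2 hn
  have hc' : 0 < c := one_pos.trans hc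
  have hμ : 0 ≤ lam / n := by positivity
  have hc0' : (ℓ - 1 / c) * c0 = u + 1 / c := by
    have : 0 < ℓ * c - 1 := by rw [div_lt_iff₀ hc'] at hℓc; linarith
    rw [hc0]; field_simp
  have hscore : ∀ j, c * |2 * empCov n f v j| ≤ lam / n * Υ0 j := fun j => by
    have h := hlam j
    rwa [hS, abs_div, abs_of_pos (hΥ0 j), mul_div_assoc', div_le_iff₀ (hΥ0 j)] at h
  have ha : empNorm n a ≤ cs := hcs
  have hd : d = f *ᵥ β₀ + (a + v) := funext fun i => (hmodel i).trans (add_assoc _ _ _)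
  have hβ₀ : ∀ j ∉ T, β₀ j = 0 := fun j hj => by simpa [hT] using hj
  have hκ' : κ = restrictedEigenvalue n f Υ0 T c0 s := hκ
  have hpred := lasso_prediction_bound hN.le hopt hd hβ₀ ha (fun j => (hΥ0 j).le) hc' hℓc
    (by linarith) hload hμ hscore hc0' hκpos (fun hcone => hκ' ▸ restrictedEigenvalue_mul_le hcone)
  set w := a - f *ᵥ (βhat - β₀)
  have hres : d - f *ᵥ βhat = w + v := by
    rw [hd]; ext i; simp [w, mulVec_sub]; ring
  have hw : empNorm n w ≤ 3 * cs + lam / n * (u + 1 / c) * √s / κ :=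
    (empNorm_sub_le hN.le _ _).trans (by linarith)
  have hlow : ∀ j ∈ That \ T, lam / n * (ℓ - 1 / c) ≤ 2 * (⨆ k, (Υ0 k)⁻¹) * |empCov n f w j| :=
    fun j hj => lasso_score_lower_bound hopt (by simpa [hThat] using (mem_sdiff.1 hj).1) hres
      hc' hμ hΥ0 (hload j).1 (hscore j)
  have hSup : 0 ≤ ⨆ k, (Υ0 k)⁻¹ := Real.iSup_nonneg fun k => (inv_pos.2 (hΥ0 k)).le
  have hcount := (sqrt_card_mul_le_sqrt_sum_sq (by positivity) (by positivity) hlow).trans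
    (mul_le_mul_of_nonneg_left (sqrt_sum_sq_empCov_le hN.le le_rfl w) (by positivity))
  rw [hφmax mhat, hmhat]
  exact pre_sparsity_of_bounds hN hlampos (sub_pos.2 hℓc) hc0' (by linarith [one_div_pos.2 hc'])
    ((empNorm_nonneg _ _).trans ha) (by positivity) hcount hw

/-- Empirical pre-sparsity for Lasso (deterministic form of Lemma 8): with
`m̂ = |T̂ ∖ T|` the number of wrong regressors selected by Lasso,
`√m̂ ≤ √(φ_max(m̂)) ‖(Υ⁰)⁻¹‖_∞ c₀ (2√s/κ_{c₀} + 6n c_s/λ)`. -/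
theorem lasso_empirical_pre_sparsity
    (n p s : ℕ) (hn : 0 < n) (hp : 0 < p)
    (f : Matrix (Fin n) (Fin p) ℝ)
    (β₀ : Fin p → ℝ) (T : Finset (Fin p))
    (hT : T = Finset.univ.filter (fun j => β₀ j ≠ 0)) (hTs : T.card ≤ s)
    (d a v : Fin n → ℝ)
    (hmodel : ∀ i, d i = (∑ j, f i j * β₀ j) + a i + v i)
    (cs : ℝ) (hcs0 : 0 ≤ cs)
    (hcs : Real.sqrt ((1 / (n : ℝ)) * ∑ i, (a i) ^ 2) ≤ cs)
    (Υ0 Υ : Fin p → ℝ) (hΥ0 : ∀ j, 0 < Υ0 j)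
    (c ℓ u lam : ℝ) (hc : 1 < c) (hu : 1 ≤ u) (hℓ1 : ℓ ≤ 1) (hℓc : 1 / c < ℓ)
    (hlampos : 0 < lam)
    (hload : ∀ j, ℓ * Υ0 j ≤ Υ j ∧ Υ j ≤ u * Υ0 j)
    (S : Fin p → ℝ)
    (hS : ∀ j, S j = 2 * ((1 / (n : ℝ)) * ∑ i, f i j * v i) / Υ0 j)
    (hlam : ∀ j, c * |S j| ≤ lam / n)
    (βhat : Fin p → ℝ)
    (hopt : ∀ β : Fin p → ℝ,
      (1 / (n : ℝ)) * (∑ i, (d i - ∑ j, f i j * βhat j) ^ 2)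
          + (lam / n) * ∑ j, Υ j * |βhat j|
        ≤ (1 / (n : ℝ)) * (∑ i, (d i - ∑ j, f i j * β j) ^ 2)
          + (lam / n) * ∑ j, Υ j * |β j|)
    (c0 κ : ℝ) (hc0 : c0 = (u * c + 1) / (ℓ * c - 1))
    (hκ : κ = sInf {r : ℝ | ∃ δ : Fin p → ℝ, δ ≠ 0 ∧
      (∑ j ∈ Tᶜ, |Υ0 j * δ j|) ≤ c0 * ∑ j ∈ T, |Υ0 j * δ j| ∧
      r = Real.sqrt s * predNorm n p f δ / ∑ j ∈ T, |Υ0 j * δ j|})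
    (hκpos : 0 < κ)
    (That : Finset (Fin p)) (hThat : That = Finset.univ.filter (fun j => βhat j ≠ 0))
    (mhat : ℕ) (hmhat : mhat = (That \ T).card)
    (φmax : ℕ → ℝ)
    (hφmax : ∀ k : ℕ, φmax k = sSup {x : ℝ | ∃ α : Fin p → ℝ,
      (Finset.univ.filter (fun j => α j ≠ 0)).card ≤ k ∧ (∑ j, (α j) ^ 2) = 1 ∧
      x = (1 / (n : ℝ)) * ∑ i, (∑ j, f i j * α j) ^ 2}) :
    Real.sqrt mhat
      ≤ Real.sqrt (φmax mhat) * (⨆ j, (Υ0 j)⁻¹) * c0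
          * (2 * Real.sqrt s / κ + 6 * n * cs / lam) :=
  lasso_empirical_pre_sparsity_general n p s hn f β₀ T hT d a v hmodel cs hcs Υ0 Υ hΥ0 c ℓ u lam hc
    hu hℓc hlampos hload S hS hlam βhat hopt c0 κ hc0 hκ hκpos That hThat mhat hmhat φmax hφmax
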